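/- arXiv:math/0010123 — 2 statements merged into one kernel-verified Lean document; each statement's English description precedes it below -/
import Mathlib

section
/- Let π : Σ* → G be a choice of generators for a group G, let # be a letter not in Σ, and let M = {u#v#w : u, v, w ∈ Σ*, π(u)π(v)π(w) = 1} be the multiplication table corresponding to the combing R = Σ*. Then M is a regular language over Σ ∪ {#} if and only if G is finite. -/
/-- The image in `G` of a word over the generating alphabet, for the monoid homomorphism
`Σ* → G` determined by the letter map `φ`. -/
def wordProd {S G : Type} [Group G] (φ : S → G) (w : List S) : G :=
  (w.map φ).prod

/-- The word metric `d(g,h) = min {|w| : π(w) = g⁻¹h}` on `G`. -/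
noncomputable def wdist {S G : Type} [Group G] (φ : S → G) (g h : G) : ℕ :=
  sInf {n : ℕ | ∃ w : List S, wordProd φ w = g⁻¹ * h ∧ w.length = n}

/-- The set of points of the path determined by the word `w` based at `g`. -/
def pathPoints {S G : Type} [Group G] (φ : S → G) (g : G) (w : List S) : Set G :=
  {x | ∃ i ≤ w.length, x = g * wordProd φ (w.take i)}

/-- A combing: a language projecting onto `G`. -/
def IsCombing {S G : Type} [Group G] (φ : S → G) (R : Language S) : Prop :=
  ∀ g : G, ∃ w ∈ R, wordProd φ w = g

/-- The word `u#v#w` over `Σ ∪ {#}`, where the letter `#` is modelled by `none`. -/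
def hashWord {S : Type} (u v w : List S) : List (Option S) :=
  u.map some ++ [none] ++ v.map some ++ [none] ++ w.map some

/-- The multiplication table `{u#v#w : u,v,w ∈ R, π(u)π(v)π(w) = 1}` determined by
the combing `R`. -/
def multTable {S G : Type} [Group G] (φ : S → G) (R : Language S) : Language (Option S) :=
  {z | ∃ u ∈ R, ∃ v ∈ R, ∃ w ∈ R,
    wordProd φ u * wordProd φ v * wordProd φ w = 1 ∧ z = hashWord u v w}

/-- Number of `#` symbols in a word. -/
def cntNone {S : Type} (z : List (Option S)) : ℕ := z.countP Option.isNone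

lemma wordProd_append {S G : Type} [Group G] (φ : S → G) (u v : List S) :
    wordProd φ (u ++ v) = wordProd φ u * wordProd φ v := by
  simp [wordProd]

lemma split_at_none {S : Type} :
    ∀ (u u' : List S) (t t' : List (Option S)),
      u.map some ++ (none :: t) = u'.map some ++ (none :: t') → u = u' ∧ t = t'
  | [], [], t, t', h => by simpa using h
  | [], a :: u', t, t', h => by simp at h
  | a :: u, [], t, t', h => by simp at h
  | a :: u, b :: u', t, t', h => by
    simp only [List.map_cons, List.cons_append, List.cons.injEq, Option.some.injEq] at h
    obtain ⟨rfl, h⟩ := h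
    obtain ⟨rfl, rfl⟩ := split_at_none u u' t t' h
    exact ⟨rfl, rfl⟩

lemma hashWord_inj {S : Type} {u v w u' v' w' : List S}
    (h : hashWord u v w = hashWord u' v' w') : u = u' ∧ v = v' ∧ w = w' := by
  have h' : u.map some ++ (none :: (v.map some ++ (none :: w.map some)))
      = u'.map some ++ (none :: (v'.map some ++ (none :: w'.map some))) := by
    simpa [hashWord, List.append_assoc] using h
  obtain ⟨rfl, h2⟩ := split_at_none _ _ _ _ h'
  obtain ⟨rfl, h3⟩ := split_at_none _ _ _ _ h2
  exact ⟨rfl, rfl, List.map_injective_iff.2 (Option.some_injective S) h3⟩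

lemma cntNone_zero {S : Type} :
    ∀ (z : List (Option S)), cntNone z = 0 → ∃ w : List S, z = w.map some
  | [], _ => ⟨[], rfl⟩
  | none :: t, h => by simp [cntNone, List.countP_cons] at h
  | some a :: t, h => by
    simp only [cntNone, List.countP_cons, Option.isNone_some, Bool.false_eq_true,
      if_false, add_zero] at h
    obtain ⟨w, rfl⟩ := cntNone_zero t h
    exact ⟨a :: w, rfl⟩

lemma cntNone_succ {S : Type} :
    ∀ (z : List (Option S)) (n : ℕ), cntNone z = n + 1 →
      ∃ (u : List S) (t : List (Option S)), z = u.map some ++ none :: t ∧ cntNone t = n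
  | [], n, h => by simp [cntNone] at h
  | none :: t, n, h => by
    refine ⟨[], t, rfl, ?_⟩
    simpa [cntNone, List.countP_cons] using h
  | some a :: t, n, h => by
    simp only [cntNone, List.countP_cons, Option.isNone_some, Bool.false_eq_true,
      if_false, add_zero] at h
    obtain ⟨u, t', rfl, h'⟩ := cntNone_succ t n h
    exact ⟨a :: u, t', rfl, h'⟩

lemma cntNone_two {S : Type} (z : List (Option S)) (h : cntNone z = 2) :
    ∃ u v w : List S, z = hashWord u v w := by
  obtain ⟨u, t, rfl, ht⟩ := cntNone_succ z 1 h
  obtain ⟨v, t', rfl, ht'⟩ := cntNone_succ t 0 ht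
  obtain ⟨w, rfl⟩ := cntNone_zero t' ht'
  exact ⟨u, v, w, by simp [hashWord]⟩

section DFA

variable {S G : Type} [Group G] (φ : S → G)

/-- The DFA recognizing the multiplication table when `G` is finite. -/
def tableDFA : DFA (Option S) (Fin 4 × G) where
  step := fun s a => match a with
    | some a => (s.1, s.2 * φ a)
    | none => (if s.1.val < 2 then s.1 + 1 else 3, s.2)
  start := (0, 1)
  accept := {s | s.1 = 2 ∧ s.2 = 1}

lemma tableDFA_evalFrom_map_some (s : Fin 4 × G) (w : List S) :
    (tableDFA φ).evalFrom s (w.map some) = (s.1, s.2 * wordProd φ w) := by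
  induction w generalizing s with
  | nil => simp [DFA.evalFrom, wordProd]
  | cons a w ih =>
    simp only [List.map_cons]
    rw [show ((tableDFA φ).evalFrom s (some a :: w.map some))
        = (tableDFA φ).evalFrom ((tableDFA φ).step s (some a)) (w.map some) from rfl, ih]
    simp [tableDFA, wordProd, mul_assoc]

lemma tableDFA_phase (s : Fin 4 × G) :
    ∀ z : List (Option S), ((tableDFA φ).evalFrom s z).1.val = min (s.1.val + cntNone z) 3 := by
  intro z
  induction z generalizing s with
  | nil =>
    have := s.1.isLt
    simp only [DFA.evalFrom, List.foldl_nil, cntNone, List.countP_nil]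
    omega
  | cons a z ih =>
    rw [show ((tableDFA φ).evalFrom s (a :: z))
        = (tableDFA φ).evalFrom ((tableDFA φ).step s a) z from rfl, ih]
    have h4 := s.1.isLt
    match a with
    | some a =>
      simp only [tableDFA, cntNone, List.countP_cons, Option.isNone_some]
      simp
    | none =>
      have hc : cntNone (none :: z) = cntNone z + 1 := by
        simp [cntNone, List.countP_cons]
      simp only [tableDFA, hc]
      split
      · next hlt =>
        have h1 : (s.1 + 1).val = s.1.val + 1 :=
          Fin.val_add_one_of_lt (by rw [Fin.lt_def]; simp [Fin.val_last]; omega)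
        rw [h1]; omega
      · next hlt =>
        have h3 : ((3 : Fin 4)).val = 3 := rfl
        rw [h3]; omega

end DFA

section Main

variable {S G : Type} [Group G] (φ : S → G)

lemma tableDFA_eval_hashWord (u v w : List S) :
    (tableDFA φ).eval (hashWord u v w)
      = (2, wordProd φ u * wordProd φ v * wordProd φ w) := by
  have key : ∀ (p : Fin 4) (g : G) (x : List S), p.val < 2 →
      (tableDFA φ).evalFrom (p, g) (x.map some ++ [none]) = (p + 1, g * wordProd φ x) := by
    intro p g x hp
    rw [DFA.evalFrom_of_append, tableDFA_evalFrom_map_some]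
    show (if p.val < 2 then p + 1 else 3, g * wordProd φ x) = _
    rw [if_pos hp]
  calc (tableDFA φ).eval (hashWord u v w)
      = (tableDFA φ).evalFrom ((tableDFA φ).evalFrom ((tableDFA φ).evalFrom
          ((0 : Fin 4), (1 : G)) (u.map some ++ [none])) (v.map some ++ [none]))
          (w.map some) := by
        simp only [DFA.eval, hashWord, DFA.evalFrom_of_append]
        rfl
    _ = (tableDFA φ).evalFrom ((tableDFA φ).evalFrom
          ((1 : Fin 4), wordProd φ u) (v.map some ++ [none])) (w.map some) := by
        rw [key 0 1 u (by norm_num), one_mul]; rfl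
    _ = (tableDFA φ).evalFrom ((2 : Fin 4), wordProd φ u * wordProd φ v) (w.map some) := by
        rw [key 1 (wordProd φ u) v (by norm_num)]; rfl
    _ = (2, wordProd φ u * wordProd φ v * wordProd φ w) := by
        rw [tableDFA_evalFrom_map_some]

lemma tableDFA_accepts :
    (tableDFA φ).accepts = multTable φ (Set.univ : Language S) := by
  ext z
  rw [DFA.mem_accepts]
  constructor
  · intro hz
    have hmem : ((tableDFA φ).eval z).1 = 2 ∧ ((tableDFA φ).eval z).2 = 1 := hz
    have hval : ((tableDFA φ).eval z).1.val = 2 := by rw [hmem.1]; rfl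
    have hp := tableDFA_phase φ (tableDFA φ).start z
    have h0 : ((tableDFA φ).start).1.val = 0 := rfl
    rw [h0] at hp
    have hcnt : cntNone z = 2 := by
      rw [show (tableDFA φ).eval z = (tableDFA φ).evalFrom (tableDFA φ).start z from rfl] at hval
      omega
    obtain ⟨u, v, w, rfl⟩ := cntNone_two z hcnt
    refine ⟨u, trivial, v, trivial, w, trivial, ?_, rfl⟩
    rw [tableDFA_eval_hashWord] at hmem
    exact hmem.2
  · rintro ⟨u, -, v, -, w, -, hprod, rfl⟩
    show _ ∈ (tableDFA φ).accept
    rw [tableDFA_eval_hashWord]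
    exact ⟨rfl, hprod⟩

end Main

/-- The multiplication table corresponding to the combing `R = Σ*` is a
regular language iff `G` is finite. -/
theorem multTable_regular_iff_finite {S G : Type} [Fintype S] [Group G]
    (inv : S → S) (hinv_inv : ∀ a, inv (inv a) = a) (hinv_ne : ∀ a, inv a ≠ a)
    (φ : S → G) (hsurj : Function.Surjective (wordProd φ))
    (hφinv : ∀ a, φ (inv a) = (φ a)⁻¹) :
    (multTable φ (Set.univ : Language S)).IsRegular ↔ Finite G := by
  constructor
  · rintro ⟨σ, finσ, M, hM⟩
    choose rep hrep using hsurj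
    obtain ⟨w0, hw0⟩ : True := trivial
    have hinj : Function.Injective (fun g : G => M.eval ((rep g).map some ++ [none])) := by
      intro g g' hgg'
      set w := rep g⁻¹ with hwdef
      have hw : wordProd φ w = g⁻¹ := hrep g⁻¹
      have h1 : hashWord (rep g) [] w ∈ multTable φ (Set.univ : Language S) :=
        ⟨rep g, trivial, [], trivial, w, trivial, by rw [hrep, hw]; simp [wordProd], rfl⟩
      have hsplit : ∀ h : G, hashWord (rep h) [] w
          = ((rep h).map some ++ [none]) ++ (none :: w.map some) := by
        intro h; simp [hashWord]
      have h2 : hashWord (rep g) [] w ∈ M.accepts := by rw [hM]; exact h1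
      have h3 : hashWord (rep g') [] w ∈ M.accepts := by
        rw [DFA.mem_accepts] at h2 ⊢
        rw [hsplit] at h2 ⊢
        rw [show ∀ z, M.eval z = M.evalFrom M.start z from fun _ => rfl,
          DFA.evalFrom_of_append] at h2 ⊢
        have hgg2 : M.evalFrom M.start (List.map some (rep g) ++ [none])
            = M.evalFrom M.start (List.map some (rep g') ++ [none]) := hgg'
        rw [← hgg2]
        exact h2
      rw [hM] at h3
      obtain ⟨u, -, v, -, w', -, hprod, heq⟩ := h3
      obtain ⟨rfl, rfl, rfl⟩ := hashWord_inj heq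
      have : g' * 1 * g⁻¹ = 1 := by
        rw [← hrep g', ← hw]; simpa [wordProd] using hprod
      group at this
      -- this : g' * g⁻¹ = 1
      have := mul_inv_eq_one.mp (by simpa using this)
      exact this.symm
    exact Finite.of_injective _ hinj
  · intro hG
    haveI := Fintype.ofFinite G
    exact ⟨Fin 4 × G, inferInstance, tableDFA φ, tableDFA_accepts φ⟩
end

section
/- Let π : Σ* → G be a choice of generators for a group G and let # be a letter not in Σ. Suppose R ⊆ Σ* is a regular combing closed under taking formal inverses such that for every a ∈ Σ ∪ {ε} the relation ρ_a = {(u, w) : u, w ∈ R, π(u)π(a) = π(w)} is a rational transduction. Then for every a ∈ Σ ∪ {ε} the column C(π(a)) = {u#w : u, w ∈ R, π(u)π(a)π(w) = 1} is a context-free language over Σ ∪ {#}. -/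
/-- The formal inverse `(a₁⋯aₙ)⁻¹ = aₙ⁻¹⋯a₁⁻¹` of a word, for an involution `inv` on
the alphabet. -/
def wordInv {S : Type} (inv : S → S) (w : List S) : List S :=
  (w.map inv).reverse

/-- A relation `ρ ⊆ Σ* × Δ*` is a rational transduction if, in the sense of Nivat's
characterization, there are a finite alphabet `Γ`, a regular language `L ⊆ Γ*` and monoid
homomorphisms `Γ* → Σ*`, `Γ* → Δ*` (determined by letter maps `f`, `g`) such that
`ρ = {(f(t), g(t)) : t ∈ L}`. -/
def IsRatTransduction {S D : Type} (ρ : Set (List S × List D)) : Prop :=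
  ∃ (Γ : Type) (_ : Fintype Γ) (L : Language Γ) (f : Γ → List S) (g : Γ → List D),
    L.IsRegular ∧
      ρ = {p | ∃ t ∈ L, p.1 = (t.map f).flatten ∧ p.2 = (t.map g).flatten}

/-- The image in `G` of an element of `Σ ∪ {ε}`, where the empty word `ε` is `none`. -/
def optProd {S G : Type} [Group G] (φ : S → G) (a : Option S) : G :=
  a.elim 1 φ

/-- The column `C_R(π(a)) = {u#w : u, w ∈ R, π(u)π(a)π(w) = 1}` of the multiplication
table, a language over `Σ ∪ {#}` with `# = none`. -/
def column {S G : Type} [Group G] (φ : S → G) (R : Language S) (a : Option S) :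
    Language (Option S) :=
  {z | ∃ u ∈ R, ∃ w ∈ R, wordProd φ u * optProd φ a * wordProd φ w = 1 ∧
    z = u.map some ++ [none] ++ w.map some}

/-- The relation `ρ_a = {(u, w) : u, w ∈ R, π(u)π(a) = π(w)}`. -/
def rhoRel {S G : Type} [Group G] (φ : S → G) (R : Language S) (a : Option S) :
    Set (List S × List S) :=
  {p | p.1 ∈ R ∧ p.2 ∈ R ∧ wordProd φ p.1 * optProd φ a = wordProd φ p.2}


/-!
Since `R` is closed under formal inverses, `u#w` lies in the column `C(π(a))` exactly when
`(u, w⁻¹) ∈ ρ_a`. Writing `ρ_a = {(f(t), g(t)) : t ∈ L}` with `L` regular, the column is the image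
of `L` under `t ↦ f(t) # g(t)⁻¹`, and formal inversion turns `g` into an antihomomorphism. Such an
image is generated by a linear grammar whose nonterminals are the states of a DFA for `L`: the rule
`q → f(c) (q·c) g(c)⁻¹` reads the letter `c`, and `q → #` ends the derivation at an accepting `q`.
-/

open Symbol

namespace ContextFreeRule

variable {T N : Type*} {r : ContextFreeRule T N} {v : List (Symbol T N)}

lemma not_rewrites_map_terminal (w : List T) : ¬ r.Rewrites (w.map terminal) v := fun h => by
  simpa using h.nonterminal_input_mem

lemma eq_of_map_terminal_append_nonterminal {p s : List T} {q i : N}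
    {p' s' : List (Symbol T N)}
    (h : p.map terminal ++ [nonterminal q] ++ s.map terminal = p' ++ [nonterminal i] ++ s') :
    p' = p.map terminal ∧ i = q ∧ s' = s.map terminal := by
  induction p generalizing p' with
  | nil =>
    cases p' with
    | nil => simpa [eq_comm] using h
    | cons x p' =>
      have : nonterminal i ∈ s.map (terminal : T → Symbol T N) := by
        simp only [List.map_nil, List.nil_append, List.cons_append, List.cons.injEq] at h
        simp [h.2]
      simp at this
  | cons a p ih =>
    cases p' with
    | nil => simp at h
    | cons x p' =>
      simp only [List.map_cons, List.cons_append, List.cons.injEq] at h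
      obtain ⟨rfl, h⟩ := h
      simpa using ih h

lemma rewrites_map_terminal_append_nonterminal_iff {p s : List T} {q : N} :
    r.Rewrites (p.map terminal ++ [nonterminal q] ++ s.map terminal) v ↔
      r.input = q ∧ v = p.map terminal ++ r.output ++ s.map terminal := by
  constructor
  · intro h
    obtain ⟨p', s', hu, rfl⟩ := h.exists_parts
    obtain ⟨rfl, hq, rfl⟩ := eq_of_map_terminal_append_nonterminal hu
    exact ⟨hq, rfl⟩
  · rintro ⟨rfl, rfl⟩
    exact rewrites_of_exists_parts r _ _

end ContextFreeRule

/-- The image of `L` under `t ↦ f(t) m g(t)`, where `f` extends to a homomorphism and `g` to an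
antihomomorphism of free monoids. -/
def Language.linearImage {Γ T : Type*} (L : Language Γ) (f g : Γ → List T) (m : List T) :
    Language T :=
  {x | ∃ t ∈ L, x = (t.map f).flatten ++ m ++ (t.map g).reverse.flatten}

namespace DFA

variable {Γ σ T : Type} (M : DFA Γ σ) (f g : Γ → List T) (m : List T)

def linearRule (q : σ) (c : Γ) : ContextFreeRule T σ :=
  ⟨q, (f c).map terminal ++ [nonterminal (M.step q c)] ++ (g c).map terminal⟩

-- Reducible, so that its nonterminals unify with the states `σ`.
open Classical in
noncomputable abbrev linearGrammar [Fintype Γ] [Fintype σ] : ContextFreeGrammar T where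
  NT := σ
  initial := M.start
  rules := (Finset.univ.image fun qc : σ × Γ => M.linearRule f g qc.1 qc.2) ∪
    (Finset.univ.filter (· ∈ M.accept)).image fun q => ⟨q, m.map terminal⟩

def linearForm (t : List Γ) : List (Symbol T σ) :=
  (t.map f).flatten.map terminal ++ [nonterminal (M.eval t)] ++
    (t.map g).reverse.flatten.map terminal

variable [Fintype Γ] [Fintype σ]

lemma mem_linearGrammar_rules {r : ContextFreeRule T σ} :
    r ∈ (M.linearGrammar f g m).rules ↔
      (∃ q c, M.linearRule f g q c = r) ∨ ∃ q ∈ M.accept, ⟨q, m.map terminal⟩ = r := by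
  simp [linearGrammar]

lemma linearGrammar_produces_linearForm_append_singleton (t : List Γ) (c : Γ) :
    (M.linearGrammar f g m).Produces (M.linearForm f g t) (M.linearForm f g (t ++ [c])) := by
  refine ⟨M.linearRule f g (M.eval t) c, (M.mem_linearGrammar_rules f g m).2 (.inl ⟨_, _, rfl⟩),
    ContextFreeRule.rewrites_map_terminal_append_nonterminal_iff.2 ⟨rfl, ?_⟩⟩
  simp [linearForm, linearRule, eval_append_singleton, List.append_assoc]

lemma linearGrammar_derives_linearForm (t : List Γ) :
    (M.linearGrammar f g m).Derives [nonterminal M.start] (M.linearForm f g t) := by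
  induction t using List.reverseRecOn with
  | nil => exact .refl _
  | append_singleton t c ih =>
    exact ih.trans_produces (M.linearGrammar_produces_linearForm_append_singleton f g m t c)

lemma linearGrammar_produces_of_mem_accepts {t : List Γ} (ht : t ∈ M.accepts) :
    (M.linearGrammar f g m).Produces (M.linearForm f g t)
      (((t.map f).flatten ++ m ++ (t.map g).reverse.flatten).map terminal) := by
  refine ⟨⟨M.eval t, m.map terminal⟩, (M.mem_linearGrammar_rules f g m).2 (.inr ⟨_, ht, rfl⟩),
    ContextFreeRule.rewrites_map_terminal_append_nonterminal_iff.2 ⟨rfl, by simp⟩⟩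

lemma linearGrammar_derives_cases {u : List (Symbol T σ)}
    (h : (M.linearGrammar f g m).Derives [nonterminal M.start] u) :
    (∃ t, u = M.linearForm f g t) ∨
      ∃ t ∈ M.accepts, u = ((t.map f).flatten ++ m ++ (t.map g).reverse.flatten).map terminal := by
  induction h with
  | refl => exact .inl ⟨[], rfl⟩
  | tail _ huv ih =>
    obtain ⟨r, hr, hrw⟩ := huv
    obtain ⟨t, rfl⟩ | ⟨t, -, rfl⟩ := ih
    · obtain ⟨hq, rfl⟩ := ContextFreeRule.rewrites_map_terminal_append_nonterminal_iff.1 hrw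
      obtain ⟨q, c, rfl⟩ | ⟨q, hq', rfl⟩ := (M.mem_linearGrammar_rules f g m).1 hr
      · obtain rfl : q = M.eval t := hq
        refine .inl ⟨t ++ [c], ?_⟩
        simp [linearForm, linearRule, eval_append_singleton, List.append_assoc]
      · obtain rfl : q = M.eval t := hq
        exact .inr ⟨t, hq', by simp [List.append_assoc]⟩
    · exact absurd hrw (ContextFreeRule.not_rewrites_map_terminal _)

theorem language_linearGrammar :
    (M.linearGrammar f g m).language = M.accepts.linearImage f g m := by
  ext x
  constructor
  · intro hx
    obtain ⟨t, h⟩ | ⟨t, ht, h⟩ := M.linearGrammar_derives_cases f g m hx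
    · have := congrArg (nonterminal (M.eval t) ∈ ·) h
      simp [linearForm] at this
    · exact ⟨t, ht, List.map_injective_iff.2 (fun _ _ => terminal.inj) h⟩
  · rintro ⟨t, ht, rfl⟩
    exact (M.linearGrammar_derives_linearForm f g m t).trans_produces
      (M.linearGrammar_produces_of_mem_accepts f g m ht)

end DFA

theorem Language.IsRegular.isContextFree_linearImage {Γ T : Type} [Fintype Γ] {L : Language Γ}
    (hL : L.IsRegular) (f g : Γ → List T) (m : List T) : (L.linearImage f g m).IsContextFree := by
  obtain ⟨σ, _, M, rfl⟩ := hL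
  exact ⟨M.linearGrammar f g m, M.language_linearGrammar f g m⟩

section FormalInverse

variable {S G : Type} [Group G] {inv : S → S} {φ : S → G}

lemma wordInv_wordInv (hinv_inv : ∀ a, inv (inv a) = a) (w : List S) :
    wordInv inv (wordInv inv w) = w := by
  simp [wordInv, List.map_reverse, Function.comp_def, hinv_inv]

lemma wordInv_flatten (L : List (List S)) :
    wordInv inv L.flatten = (L.map (wordInv inv)).reverse.flatten := by
  simp only [wordInv, List.map_flatten, List.reverse_flatten, List.map_map]
  rfl

lemma wordProd_wordInv (hφinv : ∀ a, φ (inv a) = (φ a)⁻¹) (w : List S) :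
    wordProd φ (wordInv inv w) = (wordProd φ w)⁻¹ := by
  simp [wordProd, wordInv, List.map_reverse, Function.comp_def, hφinv, List.prod_inv_reverse]

lemma column_eq_image_rhoRel (hinv_inv : ∀ a, inv (inv a) = a)
    (hφinv : ∀ a, φ (inv a) = (φ a)⁻¹) {R : Language S} (hclosed : ∀ w ∈ R, wordInv inv w ∈ R)
    (a : Option S) :
    column φ R a =
      {z | ∃ p ∈ rhoRel φ R a, z = p.1.map some ++ [none] ++ (wordInv inv p.2).map some} := by
  ext z
  constructor
  · rintro ⟨u, hu, w, hw, hprod, rfl⟩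
    refine ⟨(u, wordInv inv w), ⟨hu, hclosed w hw, ?_⟩, by rw [wordInv_wordInv hinv_inv]⟩
    rw [wordProd_wordInv hφinv]
    exact eq_inv_of_mul_eq_one_left hprod
  · rintro ⟨⟨u, v⟩, ⟨hu, hv, hprod⟩, rfl⟩
    refine ⟨u, hu, wordInv inv v, hclosed v hv, ?_, rfl⟩
    rw [wordProd_wordInv hφinv, ← hprod, mul_inv_cancel]

end FormalInverse

theorem columns_contextFree_of_asynchronouslyAutomatic_general {S G : Type} [Group G]
    (inv : S → S) (hinv_inv : ∀ a, inv (inv a) = a)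
    (φ : S → G)
    (hφinv : ∀ a, φ (inv a) = (φ a)⁻¹)
    (R : Language S)
    (hclosed : ∀ w ∈ R, wordInv inv w ∈ R)
    (hrat : ∀ a : Option S, IsRatTransduction (rhoRel φ R a)) :
    ∀ a : Option S, (column φ R a).IsContextFree := by
  intro a
  obtain ⟨Γ, _, L, f, g, hL, hρ⟩ := hrat a
  have hcolumn : column φ R a = L.linearImage (fun c => (f c).map some)
      (fun c => (wordInv inv (g c)).map some) [none] := by
    rw [column_eq_image_rhoRel hinv_inv hφinv hclosed, hρ]
    ext z
    simp [Language.linearImage, wordInv_flatten, List.map_flatten, List.map_reverse,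
      Function.comp_def]
  rw [hcolumn]
  exact hL.isContextFree_linearImage _ _ _

/-- If `R` is a regular combing closed under formal inverses such that
each `ρ_a` is a rational transduction, then each column `C(π(a))` is context-free. -/
theorem columns_contextFree_of_asynchronouslyAutomatic {S G : Type} [Fintype S] [Group G]
    (inv : S → S) (hinv_inv : ∀ a, inv (inv a) = a) (hinv_ne : ∀ a, inv a ≠ a)
    (φ : S → G) (hsurj : Function.Surjective (wordProd φ))
    (hφinv : ∀ a, φ (inv a) = (φ a)⁻¹)
    (R : Language S) (hreg : R.IsRegular) (hcomb : IsCombing φ R)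
    (hclosed : ∀ w ∈ R, wordInv inv w ∈ R)
    (hrat : ∀ a : Option S, IsRatTransduction (rhoRel φ R a)) :
    ∀ a : Option S, (column φ R a).IsContextFree :=
  columns_contextFree_of_asynchronouslyAutomatic_general inv hinv_inv φ hφinv R hclosed hrat
end
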